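/- arXiv:2305.11734 — 5 statements merged into one kernel-verified Lean document; each statement's English description precedes it below -/
import Mathlib

section
/- Let K be a field, let n ≥ 2 and m ≥ 1 be integers, and let p(x_1,…,x_m) ∈ K⟨x_1,…,x_m⟩ have zero constant term. Then there exist commutative polynomials p_{i_1 i_2 ⋯ i_k} in m(k+1) variables over K, for all 1 ≤ i_1,…,i_k ≤ m and 1 ≤ k ≤ n−1, such that for all u_i = (a^{(i)}_{jk}) ∈ T_n(K) and all 1 ≤ s < t ≤ n, the (s,t) entry of p(u_1,…,u_m) equals the sum over 1 ≤ k ≤ t−s, over all chains s = j_1 < j_2 < ⋯ < j_{k+1} = t, and over all 1 ≤ i_1,…,i_k ≤ m, of p_{i_1⋯i_k}(ā_{j_1 j_1},…,ā_{j_{k+1} j_{k+1}}) · a^{(i_1)}_{j_1 j_2} ⋯ a^{(i_k)}_{j_k j_{k+1}}, where ā_{jj} denotes the m-tuple (a^{(1)}_{jj},…,a^{(m)}_{jj}); moreover the (s,s) entry equals p(ā_{ss}). -/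
/-!
Multiplying out, the `(s, t)` entry of `u_{w_1} ⋯ u_{w_L}` is a sum over weakly increasing
index paths from `s` to `t`. Grouping the paths by the chain `s = j_1 < ⋯ < j_{k+1} = t` of
values they visit, the letters read while a path rests at `j_l` contribute diagonal entries,
i.e. a commutative polynomial in the `ā_{j_l j_l}`, and the `k` letters at which it jumps
contribute the off-diagonal factors. Inductively: appending a letter `x_q` to `p` either lets
the path rest at its end vertex `t` (factor `a^{(q)}_{tt}`) or adds a last jump `r → t`.
The diagonal entries are handled by noting that `M ↦ M s s` is an algebra homomorphism on
upper triangular matrices.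
-/

open scoped Classical

namespace Matrix

variable {m R : Type*} [LinearOrder m] [Fintype m] [CommSemiring R]

theorem BlockTriangular.mul_apply_self {A B : Matrix m m R} (hA : A.BlockTriangular id)
    (hB : B.BlockTriangular id) (i : m) : (A * B) i i = A i i * B i i := by
  rw [mul_apply]
  refine Finset.sum_eq_single i (fun j _ hji => ?_) (by simp)
  rcases hji.lt_or_gt with h | h
  · rw [hA h, zero_mul]
  · rw [hB h, mul_zero]

theorem BlockTriangular.mul_apply_eq_add_sum_Iio [LocallyFiniteOrderBot m] {A B : Matrix m m R}
    (hB : B.BlockTriangular id) (i j : m) :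
    (A * B) i j = A i j * B j j + ∑ k ∈ Finset.Iio j, A i k * B k j := by
  rw [mul_apply, ← Finset.add_sum_erase _ _ (Finset.mem_univ j)]
  congr 1
  refine (Finset.sum_subset (fun k hk => ?_) fun k hk hkj => ?_).symm
  · exact Finset.mem_erase.2 ⟨(Finset.mem_Iio.1 hk).ne, Finset.mem_univ k⟩
  · rw [hB ((Finset.mem_erase.1 hk).1.lt_of_le' (not_lt.1 (hkj ∘ Finset.mem_Iio.2))), mul_zero]

variable (R) in
@[simps]
def diagEntryAlgHom (i : m) : blockTriangularSubalgebra R R (id : m → m) →ₐ[R] R where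
  toFun A := A.1 i i
  map_one' := one_apply_eq i
  map_mul' A B := A.2.mul_apply_self B.2 i
  map_zero' := rfl
  map_add' _ _ := rfl
  commutes' r := by simp [algebraMap_matrix_apply]

end Matrix

theorem FreeAlgebra.lift_apply_self {σ R m : Type*} [CommSemiring R] [LinearOrder m] [Fintype m]
    {u : σ → Matrix m m R} (hu : ∀ q, (u q).BlockTriangular id) (p : FreeAlgebra R σ) (i : m) :
    lift R u p i i = lift R (fun q => u q i i) p := by
  let U : σ → Matrix.blockTriangularSubalgebra R R (id : m → m) := fun q => ⟨u q, hu q⟩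
  have hval : (Matrix.blockTriangularSubalgebra R R id).val.comp (lift R U) = lift R u := by
    ext; simp [U]
  have hdiag : (Matrix.diagEntryAlgHom R i).comp (lift R U) = lift R (fun q => u q i i) := by
    ext; simp [U]
  rw [← hval, ← hdiag]
  rfl

theorem StrictMono.fin_snoc {n k : ℕ} {t : Fin n} {c : Fin (k + 1) → Fin n} (hc : StrictMono c)
    (ht : c (Fin.last k) < t) : StrictMono (Fin.snoc c t : Fin (k + 2) → Fin n) := by
  rw [Fin.strictMono_iff_lt_succ]
  intro l
  induction l using Fin.lastCases with
  | last => simpa using ht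
  | cast l =>
    rw [Fin.succ_castSucc, Fin.snoc_castSucc, Fin.snoc_castSucc]
    exact hc l.castSucc_lt_succ

abbrev StrictChain (n k : ℕ) (s t : Fin n) : Type :=
  {c : Fin (k + 1) → Fin n // StrictMono c ∧ c 0 = s ∧ c (Fin.last k) = t}

namespace StrictChain

variable {n k : ℕ} {s t : Fin n}

theorem add_le (c : StrictChain n k s t) : (s : ℕ) + k ≤ t := by
  obtain ⟨c, hc, rfl, rfl⟩ := c
  suffices ∀ l : Fin (k + 1), (c 0 : ℕ) + l ≤ c l from this (Fin.last k)
  intro l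
  induction l using Fin.induction with
  | zero => simp
  | succ l ih =>
    have : (c l.castSucc : ℕ) < c l.succ := hc l.castSucc_lt_succ
    simp only [Fin.val_castSucc, Fin.val_succ] at ih ⊢
    omega

theorem isEmpty_of_sub_lt (h : (t : ℕ) - s < k) : IsEmpty (StrictChain n k s t) :=
  ⟨fun c => by have := c.add_le; omega⟩

theorem isEmpty_zero_of_ne (h : s ≠ t) : IsEmpty (StrictChain n 0 s t) :=
  ⟨fun c => h (c.2.2.1.symm.trans c.2.2.2)⟩

instance uniqueZero (s : Fin n) : Unique (StrictChain n 0 s s) where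
  default := ⟨fun _ => s, Fin.strictMono_iff_lt_succ.2 fun l => l.elim0, rfl, rfl⟩
  uniq c := Subtype.ext (funext fun l => by rw [Fin.fin_one_eq_zero l, c.2.2.1])

def snocEquiv (s t : Fin n) :
    StrictChain n (k + 1) s t ≃ Σ r : {r // r < t}, StrictChain n k s r where
  toFun c := ⟨⟨c.1 (Fin.last k).castSucc, (c.2.1 (Fin.castSucc_lt_last _)).trans_eq c.2.2.2⟩,
    ⟨Fin.init c.1, c.2.1.comp Fin.strictMono_castSucc, c.2.2.1, rfl⟩⟩
  invFun rc := ⟨Fin.snoc rc.2.1 t, rc.2.2.1.fin_snoc (rc.2.2.2.2.trans_lt rc.1.2),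
    (Fin.snoc_castSucc (i := 0) ..).trans rc.2.2.2.1, Fin.snoc_last _ _⟩
  left_inv c := Subtype.ext ((congrArg _ c.2.2.2.symm).trans (Fin.snoc_init_self c.1))
  right_inv := by
    rintro ⟨r, c⟩
    refine Sigma.subtype_ext (Subtype.ext ?_) ?_
    · simpa using c.2.2.2
    · simp

end StrictChain

noncomputable section

open Finset MvPolynomial

variable {σ R : Type*} [Fintype σ] [CommSemiring R] {n : ℕ}

/-- `P k i` is the commutative polynomial `p_{i_1⋯i_k}`; its variable `(q, j)` stands for the
diagonal entry `a^{(q)}` at the `j`-th vertex of a chain. -/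
abbrev ChainPolys (σ R : Type*) [CommSemiring R] : Type _ :=
  (k : ℕ) → (Fin k → σ) → MvPolynomial (σ × Fin (k + 1)) R

def chainWeight (u : σ → Matrix (Fin n) (Fin n) R) (P : ChainPolys σ R) (k : ℕ)
    (c : Fin (k + 1) → Fin n) : R :=
  ∑ i : Fin k → σ, eval (fun q => u q.1 (c q.2) (c q.2)) (P k i) *
    ∏ l : Fin k, u (i l) (c l.castSucc) (c l.succ)

def chainSum (u : σ → Matrix (Fin n) (Fin n) R) (P : ChainPolys σ R) (k : ℕ) (s t : Fin n) : R :=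
  ∑ c : StrictChain n k s t, chainWeight u P k c.1

section chainSum

variable (u : σ → Matrix (Fin n) (Fin n) R) (P : ChainPolys σ R)

theorem chainSum_eq_zero_of_sub_lt {k : ℕ} {s t : Fin n} (h : (t : ℕ) - s < k) :
    chainSum u P k s t = 0 :=
  have := StrictChain.isEmpty_of_sub_lt h
  Finset.sum_of_isEmpty _

theorem chainSum_zero_of_ne {s t : Fin n} (h : s ≠ t) : chainSum u P 0 s t = 0 :=
  have := StrictChain.isEmpty_zero_of_ne h
  Finset.sum_of_isEmpty _

theorem sum_range_chainSum_eq_sum_Icc {s t : Fin n} (hst : s < t) :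
    ∑ k ∈ range n, chainSum u P k s t = ∑ k ∈ Icc 1 ((t : ℕ) - s), chainSum u P k s t := by
  have hst' : (s : ℕ) < t := hst
  refine (sum_subset (fun k hk => ?_) fun k _ hk => ?_).symm
  · simp only [mem_Icc, mem_range] at hk ⊢
    omega
  · obtain rfl | hk0 := Nat.eq_zero_or_pos k
    · exact chainSum_zero_of_ne u P hst.ne
    · exact chainSum_eq_zero_of_sub_lt u P (by simp only [mem_Icc] at hk; omega)

end chainSum

/-- The family of polynomials for `p * x_q`: the new last letter `x_q` either sits at the end
vertex of a chain, contributing its diagonal entry, or performs the last step of the chain. -/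
def ChainPolys.mulι (P : ChainPolys σ R) (q : σ) : ChainPolys σ R
  | 0, i => P 0 i * X (q, 0)
  | k + 1, i => P (k + 1) i * X (q, Fin.last (k + 1)) +
      if i (Fin.last k) = q then rename (Prod.map id Fin.castSucc) (P k (Fin.init i)) else 0

section mulι

variable (u : σ → Matrix (Fin n) (Fin n) R) (P : ChainPolys σ R) (q : σ)

theorem chainWeight_mulι_zero (c : Fin 1 → Fin n) :
    chainWeight u (P.mulι q) 0 c = chainWeight u P 0 c * u q (c 0) (c 0) := by
  simp [chainWeight, ChainPolys.mulι]

theorem chainWeight_mulι_succ {k : ℕ} (c : Fin (k + 2) → Fin n) :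
    chainWeight u (P.mulι q) (k + 1) c =
      chainWeight u P (k + 1) c * u q (c (Fin.last _)) (c (Fin.last _)) +
        chainWeight u P k (Fin.init c) * u q (c (Fin.last k).castSucc) (c (Fin.last _)) := by
  simp only [chainWeight, ChainPolys.mulι, map_add, map_mul, eval_X, add_mul, sum_add_distrib]
  congr 1
  · rw [sum_mul]
    exact sum_congr rfl fun i _ => by ring
  · -- split the letters `i` into `Fin.init i` and the last letter, which has to be `q`
    rw [← (Fin.snocEquiv fun _ => σ).sum_comp, Fintype.sum_prod_type, sum_mul]
    simp [Fin.snocEquiv, Fin.prod_univ_castSucc, Fin.init, apply_ite (eval _), ite_mul,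
      eval_rename, Function.comp_def, mul_assoc]

theorem chainSum_mulι_zero (s t : Fin n) :
    chainSum u (P.mulι q) 0 s t = chainSum u P 0 s t * u q t t := by
  rw [chainSum, chainSum, sum_mul]
  refine sum_congr rfl fun c _ => ?_
  rw [chainWeight_mulι_zero]
  exact congrArg (chainWeight u P 0 c.1 * ·) (congrArg₂ (u q) c.2.2.2 c.2.2.2)

theorem chainSum_mulι_succ (k : ℕ) (s t : Fin n) :
    chainSum u (P.mulι q) (k + 1) s t =
      chainSum u P (k + 1) s t * u q t t + ∑ r ∈ Iio t, chainSum u P k s r * u q r t := by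
  simp only [chainSum, chainWeight_mulι_succ, sum_add_distrib, sum_mul]
  congr 1
  · exact sum_congr rfl fun c _ => by rw [c.2.2.2]
  · rw [← (StrictChain.snocEquiv s t).symm.sum_comp, Fintype.sum_sigma,
      sum_subtype (Iio t) (fun r => mem_Iio)]
    refine sum_congr rfl fun r _ => sum_congr rfl fun c _ => ?_
    simp [StrictChain.snocEquiv, c.2.2.2]

end mulι

variable (n) in
/-- The sum runs over all `k < n` and all entries: the chains with `k = 0` produce the diagonal,
and there are no chains from `s` to `t` when `t < s`. -/
def IsChainExpansion (P : ChainPolys σ R) (p : FreeAlgebra R σ) : Prop :=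
  ∀ u : σ → Matrix (Fin n) (Fin n) R, (∀ q, (u q).BlockTriangular id) →
    ∀ s t, FreeAlgebra.lift R u p s t = ∑ k ∈ range n, chainSum u P k s t

theorem isChainExpansion_one :
    IsChainExpansion n (fun k _ => if k = 0 then 1 else 0 : ChainPolys σ R) 1 := by
  intro u _ s t
  obtain ⟨n, rfl⟩ := Nat.exists_eq_succ_of_ne_zero s.pos.ne'
  rw [map_one, Matrix.one_apply, sum_range_succ']
  by_cases hst : s = t
  · subst hst
    simp [chainSum, chainWeight]
  · rw [chainSum_zero_of_ne u _ hst]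
    simp [hst, chainSum, chainWeight]

namespace IsChainExpansion

variable {P P' : ChainPolys σ R} {p p' : FreeAlgebra R σ}

theorem add (h : IsChainExpansion n P p) (h' : IsChainExpansion n P' p') :
    IsChainExpansion n (P + P') (p + p') := by
  intro u hu s t
  simp only [map_add, Matrix.add_apply, h u hu, h' u hu, ← sum_add_distrib, chainSum,
    chainWeight, Pi.add_apply, add_mul]

theorem smul (h : IsChainExpansion n P p) (a : R) : IsChainExpansion n (a • P) (a • p) := by
  intro u hu s t
  simp only [map_smul, Matrix.smul_apply, h u hu, mul_sum, chainSum, chainWeight,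
    Pi.smul_apply, smul_eval, smul_eq_mul, mul_assoc]

theorem mul_ι (h : IsChainExpansion n P p) (q : σ) :
    IsChainExpansion n (P.mulι q) (p * FreeAlgebra.ι R q) := by
  intro u hu s t
  obtain ⟨n, rfl⟩ := Nat.exists_eq_succ_of_ne_zero s.pos.ne'
  have hlast : ∀ r ∈ Iio t, chainSum u P n s r = 0 := fun r hr =>
    chainSum_eq_zero_of_sub_lt u P (by have : r < t := mem_Iio.1 hr; omega)
  calc FreeAlgebra.lift R u (p * FreeAlgebra.ι R q) s t
      = FreeAlgebra.lift R u p s t * u q t t +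
          ∑ r ∈ Iio t, FreeAlgebra.lift R u p s r * u q r t := by
        rw [map_mul, FreeAlgebra.lift_ι_apply, (hu q).mul_apply_eq_add_sum_Iio]
    _ = (∑ k ∈ range (n + 1), chainSum u P k s t) * u q t t +
          ∑ r ∈ Iio t, (∑ k ∈ range n, chainSum u P k s r) * u q r t := by
        rw [h u hu]
        congr 1
        refine sum_congr rfl fun r hr => ?_
        rw [h u hu, sum_range_succ, hlast r hr, add_zero]
    _ = ∑ k ∈ range (n + 1), chainSum u (P.mulι q) k s t := by
        simp only [sum_range_succ' _ n, chainSum_mulι_succ, chainSum_mulι_zero, sum_add_distrib,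
          sum_mul, add_mul]
        rw [sum_comm]
        ring

end IsChainExpansion

theorem exists_isChainExpansion (n : ℕ) (p : FreeAlgebra R σ) :
    ∃ P : ChainPolys σ R, IsChainExpansion n P p := by
  suffices ∀ x a, (∃ P : ChainPolys σ R, IsChainExpansion n P a) →
      ∃ P : ChainPolys σ R, IsChainExpansion n P (a * x) by
    simpa using this p 1 ⟨_, isChainExpansion_one⟩
  intro x
  induction x using FreeAlgebra.induction with
  | grade0 r =>
    rintro a ⟨P, h⟩
    exact ⟨_, by simpa [← Algebra.commutes, ← Algebra.smul_def] using h.smul r⟩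
  | grade1 q =>
    rintro a ⟨P, h⟩
    exact ⟨_, h.mul_ι q⟩
  | mul x y hx hy =>
    intro a ha
    simpa [mul_assoc] using hy _ (hx a ha)
  | add x y hx hy =>
    rintro a ha
    obtain ⟨P, h⟩ := hx a ha
    obtain ⟨P', h'⟩ := hy a ha
    exact ⟨_, by simpa [mul_add] using h.add h'⟩

end

theorem entry_formula_of_polynomial_eval_general
    (K : Type*) [Field K] (n m : ℕ)
    (p : FreeAlgebra K (Fin m)) :
    ∃ P : (k : ℕ) → (Fin k → Fin m) → MvPolynomial (Fin m × Fin (k + 1)) K,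
      ∀ u : Fin m → Matrix (Fin n) (Fin n) K, (∀ i, (u i).BlockTriangular id) →
        (∀ s t : Fin n, s < t →
          (FreeAlgebra.lift K u p) s t =
            ∑ k ∈ Finset.Icc 1 ((t : ℕ) - (s : ℕ)),
              ∑ j : {c : Fin (k + 1) → Fin n //
                  StrictMono c ∧ c 0 = s ∧ c (Fin.last k) = t},
                ∑ i : Fin k → Fin m,
                  MvPolynomial.eval (fun q => u q.1 (j.1 q.2) (j.1 q.2)) (P k i) *
                    ∏ l : Fin k, u (i l) (j.1 l.castSucc) (j.1 l.succ)) ∧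
        (∀ s : Fin n,
          (FreeAlgebra.lift K u p) s s = FreeAlgebra.lift K (fun i => u i s s) p) := by
  obtain ⟨P, hP⟩ := exists_isChainExpansion n p
  refine ⟨P, fun u hu => ⟨fun s t hst => ?_, FreeAlgebra.lift_apply_self hu p⟩⟩
  exact (hP u hu s t).trans (sum_range_chainSum_eq_sum_Icc u P hst)

/-- **Lemma 3.2.** Let `p ∈ K⟨x_1,…,x_m⟩` have zero constant term. Then there exist
commutative polynomials `p_{i_1⋯i_k}` in `m(k+1)` variables (variables indexed by
`Fin m × Fin (k+1)`), for all tuples `(i_1,…,i_k) ∈ {1,…,m}^k`, such that for all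
upper triangular `u_1,…,u_m ∈ T_n(K)` and all `s < t`, the `(s,t)` entry of
`p(u_1,…,u_m)` equals
`∑_{k=1}^{t-s} ∑_{s = j_1 < ⋯ < j_{k+1} = t} ∑_{i_1,…,i_k}
  p_{i_1⋯i_k}(ā_{j_1 j_1},…,ā_{j_{k+1} j_{k+1}}) · a^{(i_1)}_{j_1 j_2} ⋯ a^{(i_k)}_{j_k j_{k+1}}`,
where `ā_{jj} = (a^{(1)}_{jj},…,a^{(m)}_{jj})`; moreover the `(s,s)` entry equals
`p(ā_{ss})`. -/
theorem entry_formula_of_polynomial_eval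
    (K : Type*) [Field K] (n m : ℕ) (hn : 2 ≤ n) (hm : 1 ≤ m)
    (p : FreeAlgebra K (Fin m))
    (hconst : FreeAlgebra.lift K (fun _ : Fin m => (0 : K)) p = 0) :
    ∃ P : (k : ℕ) → (Fin k → Fin m) → MvPolynomial (Fin m × Fin (k + 1)) K,
      ∀ u : Fin m → Matrix (Fin n) (Fin n) K, (∀ i, (u i).BlockTriangular id) →
        (∀ s t : Fin n, s < t →
          (FreeAlgebra.lift K u p) s t =
            ∑ k ∈ Finset.Icc 1 ((t : ℕ) - (s : ℕ)),
              ∑ j : {c : Fin (k + 1) → Fin n //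
                  StrictMono c ∧ c 0 = s ∧ c (Fin.last k) = t},
                ∑ i : Fin k → Fin m,
                  MvPolynomial.eval (fun q => u q.1 (j.1 q.2) (j.1 q.2)) (P k i) *
                    ∏ l : Fin k, u (i l) (j.1 l.castSucc) (j.1 l.succ)) ∧
        (∀ s : Fin n,
          (FreeAlgebra.lift K u p) s s = FreeAlgebra.lift K (fun i => u i s s) p) :=
  entry_formula_of_polynomial_eval_general K n m p
end

section
/- Let n ≥ 2, m ≥ 1 be integers, let K be an algebraically closed field, and let p(x_1,…,x_m) ∈ K⟨x_1,…,x_m⟩ have zero constant term. If ord(p) = r with 1 ≤ r ≤ n−1, then p(T_n(K)) ⊆ T_n(K)^{(r−1)}; that is, for all u_1,…,u_m ∈ T_n(K), the (s,t) entry of p(u_1,…,u_m) is zero whenever t − s ≤ r − 1. -/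
open Matrix

/-- restriction of a matrix to a window of size `r` starting at `a` -/
def win (K : Type*) [Field K] {n : ℕ} (r a : ℕ) (ha : a + r ≤ n)
    (A : Matrix (Fin n) (Fin n) K) : Matrix (Fin r) (Fin r) K :=
  fun i j => A ⟨a + i, by have := i.isLt; omega⟩ ⟨a + j, by have := j.isLt; omega⟩

lemma win_blockTriangular (K : Type*) [Field K] {n : ℕ} (r a : ℕ) (ha : a + r ≤ n)
    (A : Matrix (Fin n) (Fin n) K) (hA : A.BlockTriangular id) :
    (win K r a ha A).BlockTriangular id := by
  intro i j hij
  have h : (j : ℕ) < (i : ℕ) := hij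
  exact hA (show a + (j : ℕ) < a + (i : ℕ) from Nat.add_lt_add_left h a)

lemma win_mul (K : Type*) [Field K] {n : ℕ} (r a : ℕ) (ha : a + r ≤ n)
    (A B : Matrix (Fin n) (Fin n) K) (hA : A.BlockTriangular id)
    (hB : B.BlockTriangular id) :
    win K r a ha (A * B) = win K r a ha A * win K r a ha B := by
  ext i j
  have hi := i.isLt; have hj := j.isLt
  show (A * B) ⟨a + i, by omega⟩ ⟨a + j, by omega⟩ = _
  rw [Matrix.mul_apply, Matrix.mul_apply]
  have e : Fin r → Fin n := fun l => ⟨a + l, by have := l.isLt; omega⟩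
  set f : Fin n → K := fun k => A ⟨a + i, by omega⟩ k * B k ⟨a + j, by omega⟩ with hf
  show ∑ k : Fin n, f k = ∑ l : Fin r, f ⟨a + l, by have := l.isLt; omega⟩
  have hzero : ∀ k ∈ Finset.univ,
      k ∉ (Finset.univ.image (fun l : Fin r => (⟨a + l, by have := l.isLt; omega⟩ : Fin n))) →
      f k = 0 := by
    intro k _ hk
    have hk' : (k : ℕ) < a ∨ a + r ≤ (k : ℕ) := by
      by_contra hcon
      push_neg at hcon
      exact hk (Finset.mem_image.2 ⟨⟨(k : ℕ) - a, by omega⟩, Finset.mem_univ _,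
        Fin.ext (show a + ((k : ℕ) - a) = (k : ℕ) by omega)⟩)
    rcases hk' with h | h
    · have hz : A ⟨a + i, by omega⟩ k = 0 :=
        hA (show (k : ℕ) < a + (i : ℕ) by omega)
      rw [hf]; simp only [hz, zero_mul]
    · have hz : B k ⟨a + j, by omega⟩ = 0 :=
        hB (show a + (j : ℕ) < (k : ℕ) by omega)
      rw [hf]; simp only [hz, mul_zero]
  have hinj : ∀ x ∈ Finset.univ, ∀ y ∈ Finset.univ,
      (fun l : Fin r => (⟨a + l, by have := l.isLt; omega⟩ : Fin n)) x
        = (fun l : Fin r => (⟨a + l, by have := l.isLt; omega⟩ : Fin n)) y → x = y := by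
    intro x _ y _ hxy
    have h2 : a + (x : ℕ) = a + (y : ℕ) := congrArg Fin.val hxy
    exact Fin.ext (by omega)
  calc ∑ k : Fin n, f k
      = ∑ k ∈ Finset.univ.image (fun l : Fin r => (⟨a + l, by have := l.isLt; omega⟩ : Fin n)),
          f k := (Finset.sum_subset (Finset.subset_univ _) hzero).symm
    _ = ∑ l : Fin r, f ⟨a + l, by have := l.isLt; omega⟩ := Finset.sum_image hinj

lemma win_key (K : Type*) [Field K] {n m : ℕ} (r a : ℕ) (ha : a + r ≤ n)
    (u : Fin m → Matrix (Fin n) (Fin n) K) (hu : ∀ i, (u i).BlockTriangular id)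
    (p : FreeAlgebra K (Fin m)) :
    (FreeAlgebra.lift K u p).BlockTriangular id ∧
      win K r a ha (FreeAlgebra.lift K u p)
        = FreeAlgebra.lift K (fun i => win K r a ha (u i)) p := by
  induction p using FreeAlgebra.induction with
  | grade0 c =>
      rw [AlgHom.commutes, AlgHom.commutes]
      constructor
      · rw [Matrix.algebraMap_eq_diagonal]
        exact Matrix.blockTriangular_diagonal _
      · ext i j
        show (algebraMap K (Matrix (Fin n) (Fin n) K) c)
          ⟨a + i, by have := i.isLt; omega⟩ ⟨a + j, by have := j.isLt; omega⟩ = _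
        rw [Matrix.algebraMap_matrix_apply, Matrix.algebraMap_matrix_apply]
        have hi := i.isLt; have hj := j.isLt
        by_cases h : i = j
        · subst h; simp
        · rw [if_neg, if_neg h]
          intro hc
          have h2 : a + (i : ℕ) = a + (j : ℕ) := congrArg Fin.val hc
          exact h (Fin.ext (by omega))
  | grade1 x =>
      simp only [FreeAlgebra.lift_ι_apply]
      exact ⟨hu x, trivial⟩
  | mul p q hp hq =>
      rw [_root_.map_mul, _root_.map_mul]
      refine ⟨hp.1.mul hq.1, ?_⟩
      rw [win_mul K r a ha _ _ hp.1 hq.1, hp.2, hq.2]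
  | add p q hp hq =>
      rw [_root_.map_add, _root_.map_add]
      refine ⟨hp.1.add hq.1, ?_⟩
      rw [← hp.2, ← hq.2]
      rfl

/-- **Lemma 3.4 (ii).** Let `K` be an algebraically closed field and let
`p ∈ K⟨x_1,…,x_m⟩` have zero constant term with `ord(p) = r`, `1 ≤ r ≤ n − 1`.
Then `p(T_n(K)) ⊆ T_n(K)^{(r−1)}`: for all upper triangular `u_1,…,u_m`,
the `(s,t)` entry of `p(u_1,…,u_m)` vanishes whenever `t − s ≤ r − 1`. -/
theorem image_subset_Tn_r_minus_one
    (K : Type*) [Field K] [IsAlgClosed K] (n m r : ℕ) (hn : 2 ≤ n) (hm : 1 ≤ m)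
    (p : FreeAlgebra K (Fin m))
    (hconst : FreeAlgebra.lift K (fun _ : Fin m => (0 : K)) p = 0)
    (hr : 1 ≤ r) (hrn : r ≤ n - 1)
    (hidr : ∀ u : Fin m → Matrix (Fin r) (Fin r) K,
      (∀ i, (u i).BlockTriangular id) → FreeAlgebra.lift K u p = 0)
    (hidr1 : ¬ ∀ u : Fin m → Matrix (Fin (r + 1)) (Fin (r + 1)) K,
      (∀ i, (u i).BlockTriangular id) → FreeAlgebra.lift K u p = 0) :
    ∀ u : Fin m → Matrix (Fin n) (Fin n) K, (∀ i, (u i).BlockTriangular id) →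
      ∀ s t : Fin n, ((t : ℤ) - (s : ℤ) ≤ (r : ℤ) - 1) →
        (FreeAlgebra.lift K u p) s t = 0 := by
  intro u hu s t hst
  have hrn' : r ≤ n := by omega
  rcases lt_or_ge (t : ℕ) (s : ℕ) with hts | hts
  · exact (win_key K r 0 (by omega) u hu p).1 hts
  · have hs := s.isLt; have ht := t.isLt
    have hst' : (t : ℕ) + 1 ≤ (s : ℕ) + r := by omega
    set a : ℕ := min (s : ℕ) (n - r) with hadef
    have ha : a + r ≤ n := by omega
    have has : a ≤ (s : ℕ) := by omega
    have hat : (t : ℕ) < a + r := by omega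
    have key := win_key K r a ha u hu p
    have hz := hidr (fun i => win K r a ha (u i))
      (fun i => win_blockTriangular K r a ha (u i) (hu i))
    rw [show s = (⟨a + ((s : ℕ) - a), by omega⟩ : Fin n) from
        Fin.ext (show (s : ℕ) = a + ((s : ℕ) - a) by omega),
      show t = (⟨a + ((t : ℕ) - a), by omega⟩ : Fin n) from
        Fin.ext (show (t : ℕ) = a + ((t : ℕ) - a) by omega)]
    have hfin : win K r a ha (FreeAlgebra.lift K u p)
        ⟨(s : ℕ) - a, by omega⟩ ⟨(t : ℕ) - a, by omega⟩ = 0 := by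
      rw [key.2, hz]; rfl
    exact hfin
end

section
/- Let m ≥ 1 be an integer, let K be an algebraically closed field, and let p(x_1,…,x_m) ∈ K⟨x_1,…,x_m⟩ have zero constant term with ord(p) = r ≥ 1. Then there exist u_1,…,u_m ∈ T_{r+1}(K) such that the (1, r+1) entry of p(u_1,…,u_m) is nonzero. -/
open Matrix

lemma compress_aux {K : Type*} [Field K] {m n n' : ℕ}
    (f : Fin n → Fin n') (hmono : StrictMono f)
    (hint : ∀ (a b : Fin n) (k : Fin n'), f a ≤ k → k ≤ f b → ∃ c, f c = k)
    (u : Fin m → Matrix (Fin n') (Fin n') K)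
    (htri : ∀ i, (u i).BlockTriangular id)
    (p : FreeAlgebra K (Fin m)) :
    (FreeAlgebra.lift K u p).BlockTriangular id ∧
      ∀ a b, (FreeAlgebra.lift K u p) (f a) (f b) =
        FreeAlgebra.lift K (fun k => Matrix.of (fun a b => u k (f a) (f b))) p a b := by
  induction p using FreeAlgebra.induction with
  | grade0 c =>
      constructor
      · intro i j hij
        rw [AlgHom.commutes]
        rw [Matrix.algebraMap_matrix_apply, if_neg (by exact fun h => absurd h (by simpa using hij.ne'))]
      · intro a b
        rw [AlgHom.commutes, AlgHom.commutes]
        simp only [Matrix.of_apply, Matrix.algebraMap_matrix_apply]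
        by_cases h : a = b
        · subst h; simp
        · rw [if_neg h, if_neg (fun hh => h (hmono.injective hh))]
  | grade1 x =>
      constructor
      · simpa using htri x
      · intro a b; simp
  | mul a b iha ihb =>
      obtain ⟨ta, ha⟩ := iha
      obtain ⟨tb, hb⟩ := ihb
      refine ⟨by simpa using ta.mul tb, ?_⟩
      intro x y
      rw [_root_.map_mul, _root_.map_mul]
      simp only [Matrix.mul_apply, Matrix.of_apply]
      have hzero : ∀ k ∈ (Finset.univ : Finset (Fin n')),
          k ∉ Finset.univ.image f →
          (FreeAlgebra.lift K u) a (f x) k * (FreeAlgebra.lift K u) b k (f y) = 0 := by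
        intro k _ hk
        by_cases h1 : f x ≤ k
        · by_cases h2 : k ≤ f y
          · obtain ⟨c, hc⟩ := hint x y k h1 h2
            exact absurd (hc ▸ Finset.mem_image_of_mem f (Finset.mem_univ c)) hk
          · rw [tb (show id (f y) < id k by simpa using lt_of_not_ge h2), mul_zero]
        · rw [ta (show id k < id (f x) by simpa using lt_of_not_ge h1), zero_mul]
      rw [← Finset.sum_subset (Finset.subset_univ _) hzero,
        Finset.sum_image (fun c _ d _ h => hmono.injective h)]
      exact Finset.sum_congr rfl fun c _ => by rw [ha, hb]
  | add a b iha ihb =>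
      obtain ⟨ta, ha⟩ := iha
      obtain ⟨tb, hb⟩ := ihb
      refine ⟨by simpa using ta.add tb, ?_⟩
      intro x y
      rw [_root_.map_add, _root_.map_add]
      simp only [Matrix.add_apply, ha, hb]

/-- **Lemma 3.4 (iii).** Let `K` be an algebraically closed field and let
`p ∈ K⟨x_1,…,x_m⟩` have zero constant term with `ord(p) = r ≥ 1`. Then there exist
upper triangular matrices `u_1,…,u_m ∈ T_{r+1}(K)` such that the `(1, r+1)` entry
(0-indexed: the `(0, r)` entry) of `p(u_1,…,u_m)` is nonzero. -/
theorem corner_entry_nonzero_of_ord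
    (K : Type*) [Field K] [IsAlgClosed K] (m r : ℕ) (hm : 1 ≤ m) (hr : 1 ≤ r)
    (p : FreeAlgebra K (Fin m))
    (hconst : FreeAlgebra.lift K (fun _ : Fin m => (0 : K)) p = 0)
    (hidr : ∀ u : Fin m → Matrix (Fin r) (Fin r) K,
      (∀ i, (u i).BlockTriangular id) → FreeAlgebra.lift K u p = 0)
    (hidr1 : ¬ ∀ u : Fin m → Matrix (Fin (r + 1)) (Fin (r + 1)) K,
      (∀ i, (u i).BlockTriangular id) → FreeAlgebra.lift K u p = 0) :
    ∃ u : Fin m → Matrix (Fin (r + 1)) (Fin (r + 1)) K,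
      (∀ i, (u i).BlockTriangular id) ∧
        (FreeAlgebra.lift K u p) 0 (Fin.last r) ≠ 0 := by
  push_neg at hidr1
  obtain ⟨u, htri, hne⟩ := hidr1
  refine ⟨u, htri, fun h0 => hne ?_⟩
  have mono1 : StrictMono (Fin.castSucc : Fin r → Fin (r+1)) := by
    intro a b h; simp only [Fin.lt_def, Fin.coe_castSucc] at *; omega
  have mono2 : StrictMono (Fin.succ : Fin r → Fin (r+1)) := by
    intro a b h; simp only [Fin.lt_def, Fin.val_succ] at *; omega
  have int1 : ∀ (a b : Fin r) (k : Fin (r+1)),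
      Fin.castSucc a ≤ k → k ≤ Fin.castSucc b → ∃ c, Fin.castSucc c = k := by
    intro a b k h1 h2
    simp only [Fin.le_def, Fin.coe_castSucc] at h1 h2
    exact ⟨⟨k.val, lt_of_le_of_lt h2 b.isLt⟩, Fin.ext rfl⟩
  have int2 : ∀ (a b : Fin r) (k : Fin (r+1)),
      Fin.succ a ≤ k → k ≤ Fin.succ b → ∃ c, Fin.succ c = k := by
    intro a b k h1 h2
    simp only [Fin.le_def, Fin.val_succ] at h1 h2
    exact ⟨⟨k.val - 1, by omega⟩, Fin.ext (by simp; omega)⟩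
  have h1 := compress_aux (Fin.castSucc : Fin r → Fin (r+1)) mono1 int1 u htri p
  have h2 := compress_aux (Fin.succ : Fin r → Fin (r+1)) mono2 int2 u htri p
  have z1 : FreeAlgebra.lift K
      (fun k => Matrix.of fun a b : Fin r => u k (Fin.castSucc a) (Fin.castSucc b)) p = 0 :=
    hidr _ (fun i a b hab => htri i (mono1 (by simpa using hab)))
  have z2 : FreeAlgebra.lift K
      (fun k => Matrix.of fun a b : Fin r => u k (Fin.succ a) (Fin.succ b)) p = 0 :=
    hidr _ (fun i a b hab => htri i (mono2 (by simpa using hab)))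
  ext x y
  simp only [Matrix.zero_apply]
  rcases lt_or_ge (y : ℕ) (x : ℕ) with h | h
  · exact h1.1 (show id y < id x from Fin.lt_def.mpr h)
  rcases lt_or_ge (y : ℕ) r with hy | hy
  · have hx : (x : ℕ) < r := lt_of_le_of_lt h hy
    have := h1.2 ⟨x, hx⟩ ⟨y, hy⟩
    rw [show Fin.castSucc ⟨(x:ℕ), hx⟩ = x from Fin.ext rfl,
      show Fin.castSucc ⟨(y:ℕ), hy⟩ = y from Fin.ext rfl] at this
    rw [this, z1]; simp
  · have hyr : (y : ℕ) = r := by omega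
    rcases Nat.eq_zero_or_pos (x : ℕ) with hx | hx
    · have : x = 0 ∧ y = Fin.last r := ⟨Fin.ext (by rw [Fin.val_zero]; exact hx), Fin.ext (by rw [Fin.val_last]; exact hyr)⟩
      rw [this.1, this.2]; exact h0
    · have hx' : (x : ℕ) - 1 < r := by omega
      have := h2.2 ⟨(x:ℕ) - 1, hx'⟩ ⟨r - 1, by omega⟩
      rw [show Fin.succ ⟨(x:ℕ)-1, hx'⟩ = x from Fin.ext (by simp; omega),
        show Fin.succ ⟨r-1, by omega⟩ = y from Fin.ext (by simp; omega)] at this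
      rw [this, z2]; simp
end

section
/- Let n ≥ 2, m ≥ 1 be integers, let K be an algebraically closed field, and let p(x_1,…,x_m) ∈ K⟨x_1,…,x_m⟩ have zero constant term with ord(p) = r, where 1 ≤ r ≤ n−1. Then for every a ∈ K there exist u_1,…,u_m ∈ T_n(K) such that the (1, r+1) entry of p(u_1,…,u_m) equals a. -/
open Matrix Polynomial

section Aux

variable {K : Type*} [Field K]

lemma tri_submatrix {s n : ℕ} {f : Fin s → Fin n} (hf : StrictMono f)
    {A : Matrix (Fin n) (Fin n) K} (hA : A.BlockTriangular id) :
    (A.submatrix f f).BlockTriangular id := fun _ _ hij => hA (hf hij)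

lemma submatrix_mul_tri {s n : ℕ} {f : Fin s → Fin n} (hf : StrictMono f)
    (hint : ∀ (i j : Fin s) (k : Fin n), f i ≤ k → k ≤ f j → ∃ c, f c = k)
    {A B : Matrix (Fin n) (Fin n) K} (hA : A.BlockTriangular id)
    (hB : B.BlockTriangular id) :
    (A * B).submatrix f f = A.submatrix f f * B.submatrix f f := by
  ext i j
  simp only [submatrix_apply, mul_apply]
  have h1 : ∑ k ∈ Finset.univ.map (⟨f, hf.injective⟩ : Fin s ↪ Fin n),
      A (f i) k * B k (f j) = ∑ k : Fin n, A (f i) k * B k (f j) := by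
    refine Finset.sum_subset (Finset.subset_univ _) ?_
    intro k _ hk
    rcases le_or_gt (f i) k with h1 | h1
    · rcases le_or_gt k (f j) with h2 | h2
      · obtain ⟨c, rfl⟩ := hint i j k h1 h2
        exact absurd (Finset.mem_map_of_mem _ (Finset.mem_univ c)) hk
      · rw [hB h2, mul_zero]
    · rw [hA h1, zero_mul]
  rw [← h1, Finset.sum_map]
  simp [Function.Embedding.coeFn_mk]

lemma lift_tri_and_submatrix {m s n : ℕ} {f : Fin s → Fin n} (hf : StrictMono f)
    (hint : ∀ (i j : Fin s) (k : Fin n), f i ≤ k → k ≤ f j → ∃ c, f c = k)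
    (v : Fin m → Matrix (Fin n) (Fin n) K) (hv : ∀ i, (v i).BlockTriangular id)
    (p : FreeAlgebra K (Fin m)) :
    (FreeAlgebra.lift K v p).BlockTriangular id ∧
      (FreeAlgebra.lift K v p).submatrix f f
        = FreeAlgebra.lift K (fun i => (v i).submatrix f f) p := by
  induction p using FreeAlgebra.induction with
  | grade0 c =>
    constructor
    · intro i j hij
      simp only [id_eq] at hij
      simp only [AlgHom.commutes, Matrix.algebraMap_eq_diagonal]
      exact Matrix.diagonal_apply_ne _ (ne_of_gt hij)
    · simp only [AlgHom.commutes, Matrix.algebraMap_eq_diagonal]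
      ext i j
      by_cases hij : i = j
      · subst hij; simp [Matrix.diagonal_apply_eq]
      · rw [Matrix.submatrix_apply, Matrix.diagonal_apply_ne _ (fun h => hij (hf.injective h)),
          Matrix.diagonal_apply_ne _ hij]
  | grade1 x =>
    constructor
    · simpa using hv x
    · simp
  | mul a b ha hb =>
    refine ⟨?_, ?_⟩
    · rw [_root_.map_mul]; exact ha.1.mul hb.1
    · rw [_root_.map_mul, _root_.map_mul, submatrix_mul_tri hf hint ha.1 hb.1, ha.2, hb.2]
  | add a b ha hb =>
    refine ⟨?_, ?_⟩
    · rw [_root_.map_add]; exact ha.1.add hb.1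
    · rw [_root_.map_add, _root_.map_add, Matrix.submatrix_add, ← ha.2, ← hb.2]; rfl

end Aux

private def pad {K : Type*} [Field K] {n r : ℕ} (h : r + 1 ≤ n)
    (A : Matrix (Fin (r + 1)) (Fin (r + 1)) K) : Matrix (Fin n) (Fin n) K :=
  Matrix.of fun i j =>
    if hij : (i : ℕ) < r + 1 ∧ (j : ℕ) < r + 1 then A ⟨i, hij.1⟩ ⟨j, hij.2⟩ else 0

private lemma pad_tri {K : Type*} [Field K] {n r : ℕ} (h : r + 1 ≤ n)
    {A : Matrix (Fin (r + 1)) (Fin (r + 1)) K} (hA : A.BlockTriangular id) :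
    (pad h A).BlockTriangular id := by
  intro i j hij
  simp only [id_eq] at hij
  simp only [pad, Matrix.of_apply]
  split
  · next hcond =>
      exact hA (show (⟨(j : ℕ), hcond.2⟩ : Fin (r + 1)) < ⟨(i : ℕ), hcond.1⟩ by
        rw [Fin.mk_lt_mk]; exact hij)
  · rfl

private lemma pad_submatrix {K : Type*} [Field K] {n r : ℕ} (h : r + 1 ≤ n)
    (A : Matrix (Fin (r + 1)) (Fin (r + 1)) K) :
    (pad h A).submatrix (Fin.castLE h) (Fin.castLE h) = A := by
  ext i j
  exact dif_pos ⟨i.isLt, j.isLt⟩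

set_option maxHeartbeats 1000000 in
/-- Let `K` be an algebraically closed field and let `p ∈ K⟨x_1,…,x_m⟩` have zero
constant term with `ord(p) = r`, `1 ≤ r ≤ n − 1`. Then for every `a ∈ K` there exist
upper triangular matrices `u_1,…,u_m ∈ T_n(K)` such that the `(1, r+1)` entry
(0-indexed: the `(0, r)` entry) of `p(u_1,…,u_m)` equals `a`. -/
theorem corner_entry_surjective
    (K : Type*) [Field K] [IsAlgClosed K] (n m r : ℕ) (hn : 2 ≤ n) (hm : 1 ≤ m)
    (p : FreeAlgebra K (Fin m))
    (hconst : FreeAlgebra.lift K (fun _ : Fin m => (0 : K)) p = 0)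
    (hr : 1 ≤ r) (hrn : r ≤ n - 1)
    (hidr : ∀ u : Fin m → Matrix (Fin r) (Fin r) K,
      (∀ i, (u i).BlockTriangular id) → FreeAlgebra.lift K u p = 0)
    (hidr1 : ¬ ∀ u : Fin m → Matrix (Fin (r + 1)) (Fin (r + 1)) K,
      (∀ i, (u i).BlockTriangular id) → FreeAlgebra.lift K u p = 0) :
    ∀ a : K, ∃ u : Fin m → Matrix (Fin n) (Fin n) K,
      (∀ i, (u i).BlockTriangular id) ∧
        (FreeAlgebra.lift K u p) ⟨0, by omega⟩ ⟨r, by omega⟩ = a := by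
  intro a
  have hr1n : r + 1 ≤ n := by omega
  push_neg at hidr1
  obtain ⟨w, hw, hPne⟩ := hidr1
  set P := FreeAlgebra.lift K w p with hPdef
  -- triangularity of P
  have hint_id : ∀ (i j : Fin (r + 1)) (k : Fin (r + 1)),
      id i ≤ k → k ≤ id j → ∃ c, id c = k := fun _ _ k _ _ => ⟨k, rfl⟩
  have hPtri : P.BlockTriangular id :=
    (lift_tri_and_submatrix strictMono_id hint_id w hw p).1
  -- compression along castLE : Fin r → Fin (r+1)
  have hle : r ≤ r + 1 := Nat.le_succ r
  have hint0 : ∀ (i j : Fin r) (k : Fin (r + 1)),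
      Fin.castLE hle i ≤ k → k ≤ Fin.castLE hle j → ∃ c, Fin.castLE hle c = k := by
    intro i j k h1 h2
    have h2' : (k : ℕ) ≤ (j : ℕ) := by simpa [Fin.le_def] using h2
    exact ⟨⟨(k : ℕ), by omega⟩, Fin.ext rfl⟩
  have h0mat : P.submatrix (Fin.castLE hle) (Fin.castLE hle) = 0 := by
    rw [(lift_tri_and_submatrix (Fin.strictMono_castLE hle) hint0 w hw p).2]
    exact hidr _ (fun i => tri_submatrix (Fin.strictMono_castLE hle) (hw i))
  -- compression along succ-like embedding g : Fin r → Fin (r+1)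
  set g : Fin r → Fin (r + 1) := fun k => ⟨(k : ℕ) + 1, by omega⟩ with hg
  have hgmono : StrictMono g := by
    intro x y hxy
    simp only [Fin.lt_def, hg] at *
    omega
  have hint1 : ∀ (i j : Fin r) (k : Fin (r + 1)),
      g i ≤ k → k ≤ g j → ∃ c, g c = k := by
    intro i j k h1 h2
    have h1' : (i : ℕ) + 1 ≤ (k : ℕ) := by simpa [Fin.le_def, hg] using h1
    have h2' : (k : ℕ) ≤ (j : ℕ) + 1 := by simpa [Fin.le_def, hg] using h2
    refine ⟨⟨(k : ℕ) - 1, by omega⟩, Fin.ext ?_⟩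
    simp only [hg]
    omega
  have h1mat : P.submatrix g g = 0 := by
    rw [(lift_tri_and_submatrix hgmono hint1 w hw p).2]
    exact hidr _ (fun i => tri_submatrix hgmono (hw i))
  -- all entries of P but the (0, r) corner vanish
  have hzeroE : ∀ i j : Fin (r + 1), ¬((i : ℕ) = 0 ∧ (j : ℕ) = r) → P i j = 0 := by
    intro i j hne
    rcases lt_or_ge j i with hji | hij_le
    · exact hPtri hji
    · have hij : (i : ℕ) ≤ (j : ℕ) := hij_le
      by_cases hjr : (j : ℕ) < r
      · have hi : (i : ℕ) < r := lt_of_le_of_lt hij hjr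
        have h0' : ∀ a b, P.submatrix (Fin.castLE hle) (Fin.castLE hle) a b = 0 := by
          intro a b; rw [h0mat]; simp
        have h0'' := h0' ⟨(i : ℕ), hi⟩ ⟨(j : ℕ), hjr⟩
        rw [Matrix.submatrix_apply] at h0''
        exact h0''
      · have hjr' : (j : ℕ) = r := by have := j.isLt; omega
        have hi1 : 1 ≤ (i : ℕ) := by
          rcases Nat.eq_zero_or_pos (i : ℕ) with h | h
          · exact absurd ⟨h, hjr'⟩ hne
          · exact h
        have e1 : g ⟨(i : ℕ) - 1, by omega⟩ = i := Fin.ext (by simp [hg]; omega)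
        have e2 : g ⟨(j : ℕ) - 1, by omega⟩ = j := Fin.ext (by simp [hg]; omega)
        have h1' : ∀ a b, P.submatrix g g a b = 0 := by
          intro a b; rw [h1mat]; simp
        have := h1' ⟨(i : ℕ) - 1, by omega⟩ ⟨(j : ℕ) - 1, by omega⟩
        rwa [Matrix.submatrix_apply, e1, e2] at this
  have hc : P ⟨0, by omega⟩ ⟨r, by omega⟩ ≠ 0 := by
    intro h00
    apply hPne
    ext i j
    rw [Matrix.zero_apply]
    by_cases hij : (i : ℕ) = 0 ∧ (j : ℕ) = r
    · obtain ⟨hi0, hjr⟩ := hij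
      have ei : i = ⟨0, Nat.succ_pos r⟩ := Fin.ext hi0
      have ej : j = ⟨r, Nat.lt_succ_self r⟩ := Fin.ext hjr
      subst ei; subst ej
      exact h00
    · exact hzeroE i j hij
  -- polynomial in one variable recording scaling
  set W : Fin m → Matrix (Fin (r + 1)) (Fin (r + 1)) (Polynomial K) :=
    fun i => (w i).map (fun c => Polynomial.X * Polynomial.C c) with hW
  have hcomm : ∀ t : K, FreeAlgebra.lift K (fun i => t • w i) p
      = (Polynomial.aeval t : Polynomial K →ₐ[K] K).mapMatrix (FreeAlgebra.lift K W p) := by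
    intro t
    have heq : ((Polynomial.aeval t : Polynomial K →ₐ[K] K).mapMatrix.comp
        (FreeAlgebra.lift K W))
        = FreeAlgebra.lift K (fun i => t • w i) := by
      apply FreeAlgebra.hom_ext
      funext x
      simp only [Function.comp_apply, AlgHom.coe_comp, FreeAlgebra.lift_ι_apply,
        AlgHom.mapMatrix_apply, hW]
      ext i j
      simp only [Matrix.map_apply, Matrix.smul_apply, _root_.map_mul, Polynomial.aeval_X,
        Polynomial.aeval_C, Algebra.algebraMap_self_apply, smul_eq_mul]
    rw [← heq]
    rfl
  set PP : Polynomial K := (FreeAlgebra.lift K W p) ⟨0, by omega⟩ ⟨r, by omega⟩ with hPP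
  have heval : ∀ t : K, (FreeAlgebra.lift K (fun i => t • w i) p) ⟨0, by omega⟩ ⟨r, by omega⟩
      = Polynomial.eval t PP := by
    intro t
    rw [hcomm t]
    simp [AlgHom.mapMatrix_apply, Matrix.map_apply, Polynomial.coe_aeval_eq_eval, hPP]
  have hzero : FreeAlgebra.lift K
      (fun _ : Fin m => (0 : Matrix (Fin (r + 1)) (Fin (r + 1)) K)) p = 0 := by
    have heq : (FreeAlgebra.lift K (fun _ : Fin m => (0 : Matrix (Fin (r + 1)) (Fin (r + 1)) K)))
        = (Algebra.ofId K (Matrix (Fin (r + 1)) (Fin (r + 1)) K)).comp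
            (FreeAlgebra.lift K (fun _ : Fin m => (0 : K))) := by
      apply FreeAlgebra.hom_ext
      funext x
      simp [Algebra.ofId_apply]
    rw [heq]
    simp [hconst]
  have hP0 : Polynomial.eval 0 PP = 0 := by
    have h00 : (fun i => (0 : K) • w i)
        = fun _ : Fin m => (0 : Matrix (Fin (r + 1)) (Fin (r + 1)) K) := by
      funext i; simp
    have h := heval 0
    rw [h00, hzero] at h
    simpa using h.symm
  have hP1 : Polynomial.eval 1 PP = P ⟨0, by omega⟩ ⟨r, by omega⟩ := by
    have h11 : (fun i => (1 : K) • w i) = w := by funext i; simp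
    have h := heval 1
    rw [h11] at h
    exact h.symm
  have hPPne : ∀ b : K, PP ≠ Polynomial.C b := by
    intro b hb
    rw [hb] at hP0 hP1
    simp only [Polynomial.eval_C] at hP0 hP1
    exact hc (by rw [← hP1, hP0])
  have hdeg : (PP - Polynomial.C a).degree ≠ 0 := by
    intro hd
    have h := Polynomial.eq_C_of_degree_le_zero (le_of_eq hd)
    apply hPPne ((PP - Polynomial.C a).coeff 0 + a)
    rw [Polynomial.C_add, ← h]
    ring
  obtain ⟨t, ht⟩ := IsAlgClosed.exists_root _ hdeg
  have hta : Polynomial.eval t PP = a := by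
    have h : Polynomial.eval t (PP - Polynomial.C a) = 0 := ht
    rw [Polynomial.eval_sub, Polynomial.eval_C, sub_eq_zero] at h
    exact h
  -- assemble the final tuple
  set u : Fin m → Matrix (Fin n) (Fin n) K := fun i => pad hr1n (t • w i) with hu
  have hutri : ∀ i, (u i).BlockTriangular id := by
    intro i
    apply pad_tri
    intro a b hab
    rw [Matrix.smul_apply, hw i hab, smul_zero]
  refine ⟨u, hutri, ?_⟩
  have hintL : ∀ (i j : Fin (r + 1)) (k : Fin n),
      Fin.castLE hr1n i ≤ k → k ≤ Fin.castLE hr1n j → ∃ c, Fin.castLE hr1n c = k := by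
    intro i j k h1 h2
    have h2' : (k : ℕ) ≤ (j : ℕ) := by simpa [Fin.le_def] using h2
    exact ⟨⟨(k : ℕ), by omega⟩, Fin.ext rfl⟩
  have L := (lift_tri_and_submatrix (Fin.strictMono_castLE hr1n) hintL u hutri p).2
  have hsub : (fun i => (u i).submatrix (Fin.castLE hr1n) (Fin.castLE hr1n))
      = fun i => t • w i := funext fun i => pad_submatrix hr1n _
  rw [hsub] at L
  have L' : ((FreeAlgebra.lift K u p).submatrix (Fin.castLE hr1n) (Fin.castLE hr1n))
      ⟨0, by omega⟩ ⟨r, by omega⟩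
      = (FreeAlgebra.lift K (fun i => t • w i) p) ⟨0, by omega⟩ ⟨r, by omega⟩ := by rw [L]
  rw [Matrix.submatrix_apply] at L'
  exact L'.trans ((heval t).trans hta)
end

section
/- Let n and s be integers with 1 ≤ s ≤ n, let K be an algebraically closed field, and let p(x_1,…,x_s) be a nonzero commutative polynomial in K[x_1,…,x_s]. Then there exist a_1,…,a_n ∈ K such that p(a_{i_1},…,a_{i_s}) ≠ 0 for every choice of indices i_1 < i_2 < ⋯ < i_s from {1,…,n}. -/
/-- **Lemma 3.5.** Let `1 ≤ s ≤ n`, let `K` be an algebraically closed field, and let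
`p ∈ K[x_1,…,x_s]` be a nonzero commutative polynomial. Then there exist
`a_1,…,a_n ∈ K` such that `p(a_{i_1},…,a_{i_s}) ≠ 0` for every choice of indices
`i_1 < i_2 < ⋯ < i_s` from `{1,…,n}`. -/
theorem exists_point_nonzero_on_all_subtuples
    (K : Type*) [Field K] [IsAlgClosed K] (n s : ℕ) (hs : 1 ≤ s) (hn : s ≤ n)
    (p : MvPolynomial (Fin s) K) (hp : p ≠ 0) :
    ∃ a : Fin n → K, ∀ i : Fin s → Fin n, StrictMono i →
      MvPolynomial.eval (fun l => a (i l)) p ≠ 0 := by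
  classical
  set Q : MvPolynomial (Fin n) K :=
    ∏ i : {i : Fin s → Fin n // StrictMono i}, MvPolynomial.rename i.1 p with hQ
  have hQ0 : Q ≠ 0 := by
    apply Finset.prod_ne_zero_iff.2
    intro i _
    exact fun h => hp (MvPolynomial.rename_injective i.1 i.2.injective (by simpa using h))
  have : ¬ ∀ a : Fin n → K, MvPolynomial.eval a Q = 0 := by
    intro h
    exact hQ0 (MvPolynomial.funext fun a => by simpa using h a)
  push_neg at this
  obtain ⟨a, ha⟩ := this
  refine ⟨a, fun i hi h => ha ?_⟩
  rw [hQ, map_prod]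
  exact Finset.prod_eq_zero (Finset.mem_univ ⟨i, hi⟩)
    (by rw [MvPolynomial.eval_rename]; exact h)
end
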